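/- arXiv:math/0510411 — 9 statements merged into one kernel-verified Lean document; each statement's English description precedes it below -/
import Mathlib

section
/- Let 𝔤₁ and 𝔤₂ be Lie algebras over a field k, equipped with bilinear maps ▷ : 𝔤₂ × 𝔤₁ → 𝔤₁ and ◁ : 𝔤₂ × 𝔤₁ → 𝔤₂ satisfying: [x,y]▷a = x▷(y▷a) − y▷(x▷a); x◁[a,b] = (x◁a)◁b − (x◁b)◁a; x▷[a,b] = [x▷a, b] + [a, x▷b] + (x◁a)▷b − (x◁b)▷a; and [x,y]◁a = [x, y◁a] + [x◁a, y] + x◁(y▷a) − y◁(x▷a), for all a,b ∈ 𝔤₁ and x,y ∈ 𝔤₂. Then the bracket on the vector space 𝔤₁ × 𝔤₂ defined by [(a,x),(b,y)] = ([a,b] + x▷b − y▷a, [x,y] + x◁b − y◁a) is alternating and satisfies the Jacobi identity, so it makes 𝔤₁ × 𝔤₂ into a Lie algebra in which 𝔤₁ × {0} and {0} × 𝔤₂ are Lie subalgebras. -/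
/-!
Expand the Jacobi sum of the bracket by bilinearity and look at each component separately.
In the `g1`-component the terms `⁅⁅a, b⁆, c⁆` cancel by the Jacobi identity of `g1`, the terms
`tr ⁅x, y⁆ c` are unfolded by `h1` and the terms `tr x ⁅b, c⁆` by `h3`; everything left cancels
in pairs once mixed brackets such as `⁅c, tr x b⁆` are flipped by
skew-symmetry. The `g2`-component is symmetric, with the Jacobi identity of `g2`, `h2` and `h4`.
-/

namespace BicrossedProduct

variable {k g1 g2 : Type*} [CommRing k] [LieRing g1] [LieAlgebra k g1] [LieRing g2]
  [LieAlgebra k g2] (tr : g2 →ₗ[k] g1 →ₗ[k] g1) (tl : g2 →ₗ[k] g1 →ₗ[k] g2)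

def bracket (p q : g1 × g2) : g1 × g2 :=
  (⁅p.1, q.1⁆ + tr p.2 q.1 - tr q.2 p.1, ⁅p.2, q.2⁆ + tl p.2 q.1 - tl q.2 p.1)

theorem bracket_self (p : g1 × g2) : bracket tr tl p p = 0 := by
  simp [bracket]

theorem bracket_jacobi_fst
    (h1 : ∀ (x y : g2) (a : g1), tr ⁅x, y⁆ a = tr x (tr y a) - tr y (tr x a))
    (h3 : ∀ (x : g2) (a b : g1),
      tr x ⁅a, b⁆ = ⁅tr x a, b⁆ + ⁅a, tr x b⁆ + tr (tl x a) b - tr (tl x b) a)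
    (p q r : g1 × g2) :
    (bracket tr tl p (bracket tr tl q r) + bracket tr tl q (bracket tr tl r p) +
      bracket tr tl r (bracket tr tl p q)).1 = 0 := by
  obtain ⟨a, x⟩ := p
  obtain ⟨b, y⟩ := q
  obtain ⟨c, z⟩ := r
  simp only [bracket, Prod.fst_add, map_add, map_sub, lie_add, lie_sub, LinearMap.add_apply,
    LinearMap.sub_apply, h1, h3]
  rw [← lie_skew (tr x b) c, ← lie_skew (tr y c) a, ← lie_skew (tr z a) b]
  linear_combination (norm := abel) lie_jacobi a b c

theorem bracket_jacobi_snd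
    (h2 : ∀ (x : g2) (a b : g1), tl x ⁅a, b⁆ = tl (tl x a) b - tl (tl x b) a)
    (h4 : ∀ (x y : g2) (a : g1),
      tl ⁅x, y⁆ a = ⁅x, tl y a⁆ + ⁅tl x a, y⁆ + tl x (tr y a) - tl y (tr x a))
    (p q r : g1 × g2) :
    (bracket tr tl p (bracket tr tl q r) + bracket tr tl q (bracket tr tl r p) +
      bracket tr tl r (bracket tr tl p q)).2 = 0 := by
  obtain ⟨a, x⟩ := p
  obtain ⟨b, y⟩ := q
  obtain ⟨c, z⟩ := r
  simp only [bracket, Prod.snd_add, map_add, map_sub, lie_add, lie_sub,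
    LinearMap.add_apply, LinearMap.sub_apply, h2, h4]
  rw [← lie_skew (tl y a) z, ← lie_skew (tl z b) x, ← lie_skew (tl x c) y]
  linear_combination (norm := abel) lie_jacobi x y z

end BicrossedProduct

open BicrossedProduct in
/-- The bicrossed product bracket on `g1 × g2` arising from a matched pair of Lie
algebras is alternating, satisfies the Jacobi identity, and `g1 × {0}`, `{0} × g2`
are closed under it. -/
theorem bicrossed_product_lie_algebra
    {k : Type*} [Field k] {g1 g2 : Type*}
    [LieRing g1] [LieAlgebra k g1] [LieRing g2] [LieAlgebra k g2]
    (tr : g2 →ₗ[k] g1 →ₗ[k] g1) (tl : g2 →ₗ[k] g1 →ₗ[k] g2)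
    (h1 : ∀ (x y : g2) (a : g1), tr ⁅x, y⁆ a = tr x (tr y a) - tr y (tr x a))
    (h2 : ∀ (x : g2) (a b : g1), tl x ⁅a, b⁆ = tl (tl x a) b - tl (tl x b) a)
    (h3 : ∀ (x : g2) (a b : g1),
      tr x ⁅a, b⁆ = ⁅tr x a, b⁆ + ⁅a, tr x b⁆ + tr (tl x a) b - tr (tl x b) a)
    (h4 : ∀ (x y : g2) (a : g1),
      tl ⁅x, y⁆ a = ⁅x, tl y a⁆ + ⁅tl x a, y⁆ + tl x (tr y a) - tl y (tr x a))
    (B : g1 × g2 → g1 × g2 → g1 × g2)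
    (hB : ∀ (a b : g1) (x y : g2),
      B (a, x) (b, y) = (⁅a, b⁆ + tr x b - tr y a, ⁅x, y⁆ + tl x b - tl y a)) :
    (∀ p, B p p = 0) ∧
    (∀ p q r, B p (B q r) + B q (B r p) + B r (B p q) = 0) ∧
    (∀ a b : g1, (B (a, 0) (b, 0)).2 = 0) ∧
    (∀ x y : g2, (B (0, x) (0, y)).1 = 0) := by
  obtain rfl : B = bracket tr tl := funext₂ fun p q => hB p.1 q.1 p.2 q.2
  refine ⟨bracket_self tr tl, fun p q r => Prod.ext ?_ ?_, fun a b => ?_, fun x y => ?_⟩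
  · exact bracket_jacobi_fst tr tl h1 h3 p q r
  · exact bracket_jacobi_snd tr tl h2 h4 p q r
  all_goals simp [bracket]
end

section
/- Let 𝔤 be a Lie algebra over a field k with Lie subalgebras 𝔤₁ and 𝔤₂ such that 𝔤 = 𝔤₁ ⊕ 𝔤₂ as vector spaces (every element of 𝔤 is uniquely the sum of an element of 𝔤₁ and an element of 𝔤₂), and let π₁ : 𝔤 → 𝔤₁ and π₂ : 𝔤 → 𝔤₂ be the corresponding linear projections. For x ∈ 𝔤₂ and a ∈ 𝔤₁ define x▷a = π₁([x,a]) and x◁a = π₂([x,a]). Then: (i) [x,y]▷a = x▷(y▷a) − y▷(x▷a) and x◁[a,b] = (x◁a)◁b − (x◁b)◁a; (ii) x▷[a,b] = [x▷a, b] + [a, x▷b] + (x◁a)▷b − (x◁b)▷a and [x,y]◁a = [x, y◁a] + [x◁a, y] + x◁(y▷a) − y◁(x▷a); (iii) for all a,b ∈ 𝔤₁ and x,y ∈ 𝔤₂, [a + x, b + y] = ([a,b] + x▷b − y▷a) + ([x,y] + x◁b − y◁a). -/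
/-- From a vector-space direct sum decomposition `g = g1 ⊕ g2` of a Lie algebra into
two Lie subalgebras, the maps `x ▷ a = π₁⁅x,a⁆` and `x ◁ a = π₂⁅x,a⁆` satisfy the
matched-pair (module and compatibility) identities, and the bracket decomposes as
`⁅a + x, b + y⁆ = (⁅a,b⁆ + x▷b − y▷a) + (⁅x,y⁆ + x◁b − y◁a)`. -/
theorem matched_pair_from_decomposition
    {k : Type*} [Field k] {g : Type*} [LieRing g] [LieAlgebra k g]
    (g1 g2 : LieSubalgebra k g)
    (π1 π2 : g →ₗ[k] g)
    (hmem : ∀ z : g, π1 z ∈ g1 ∧ π2 z ∈ g2 ∧ π1 z + π2 z = z)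
    (huniq : ∀ z : g, ∀ a ∈ g1, ∀ x ∈ g2, a + x = z → a = π1 z ∧ x = π2 z)
    (tr tl : g → g → g)
    (htr : ∀ x a : g, tr x a = π1 ⁅x, a⁆)
    (htl : ∀ x a : g, tl x a = π2 ⁅x, a⁆) :
    (∀ a ∈ g1, ∀ x ∈ g2, ∀ y ∈ g2,
      tr ⁅x, y⁆ a = tr x (tr y a) - tr y (tr x a)) ∧
    (∀ a ∈ g1, ∀ b ∈ g1, ∀ x ∈ g2,
      tl x ⁅a, b⁆ = tl (tl x a) b - tl (tl x b) a) ∧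
    (∀ a ∈ g1, ∀ b ∈ g1, ∀ x ∈ g2,
      tr x ⁅a, b⁆ = ⁅tr x a, b⁆ + ⁅a, tr x b⁆ + tr (tl x a) b - tr (tl x b) a) ∧
    (∀ a ∈ g1, ∀ x ∈ g2, ∀ y ∈ g2,
      tl ⁅x, y⁆ a = ⁅x, tl y a⁆ + ⁅tl x a, y⁆ + tl x (tr y a) - tl y (tr x a)) ∧
    (∀ a ∈ g1, ∀ b ∈ g1, ∀ x ∈ g2, ∀ y ∈ g2,
      ⁅a + x, b + y⁆ = (⁅a, b⁆ + tr x b - tr y a) + (⁅x, y⁆ + tl x b - tl y a)) := by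
  have p1g1 : ∀ z ∈ g1, π1 z = z := fun z hz =>
    ((huniq z z hz 0 g2.zero_mem (add_zero z)).1).symm
  have p2g1 : ∀ z ∈ g1, π2 z = 0 := fun z hz =>
    ((huniq z z hz 0 g2.zero_mem (add_zero z)).2).symm
  have p1g2 : ∀ z ∈ g2, π1 z = 0 := fun z hz =>
    ((huniq z 0 g1.zero_mem z hz (zero_add z)).1).symm
  have p2g2 : ∀ z ∈ g2, π2 z = z := fun z hz =>
    ((huniq z 0 g1.zero_mem z hz (zero_add z)).2).symm
  have trm : ∀ x a : g, tr x a ∈ g1 := fun x a => (htr x a) ▸ (hmem ⁅x, a⁆).1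
  have tlm : ∀ x a : g, tl x a ∈ g2 := fun x a => (htl x a) ▸ (hmem ⁅x, a⁆).2.1
  have key : ∀ x a : g, ⁅x, a⁆ = tr x a + tl x a := fun x a => by
    rw [htr, htl]; exact ((hmem ⁅x, a⁆).2.2).symm
  refine ⟨?_, ?_, ?_, ?_, ?_⟩
  · intro a ha x hx y hy
    rw [htr, lie_lie, map_sub, key y a, key x a, lie_add, lie_add, map_add, map_add,
      p1g2 _ (g2.lie_mem hx (tlm y a)), p1g2 _ (g2.lie_mem hy (tlm x a)),
      ← htr, ← htr]
    abel
  · intro a ha b hb x hx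
    rw [htl, leibniz_lie, map_add, key x a, key x b, add_lie,
      ← lie_skew a]
    rw [add_lie, map_add, map_neg, map_add,
      p2g1 _ (g1.lie_mem (trm x a) hb), p2g1 _ (g1.lie_mem (trm x b) ha),
      ← htl, ← htl]
    abel
  · intro a ha b hb x hx
    rw [htr, leibniz_lie, map_add, key x a, key x b, add_lie,
      ← lie_skew a]
    rw [add_lie, map_add, map_neg, map_add,
      p1g1 _ (g1.lie_mem (trm x a) hb), p1g1 _ (g1.lie_mem (trm x b) ha),
      ← htr, ← htr, ← lie_skew a (tr x b)]
    abel
  · intro a ha x hx y hy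
    rw [htl, lie_lie, map_sub, key y a, key x a, lie_add, lie_add, map_add, map_add,
      p2g2 _ (g2.lie_mem hx (tlm y a)), p2g2 _ (g2.lie_mem hy (tlm x a)),
      ← htl, ← htl, ← lie_skew y (tl x a)]
    abel
  · intro a ha b hb x hx y hy
    have h1 : ⁅a, y⁆ = -(tr y a) - tl y a := by
      rw [← lie_skew, key y a]; abel
    rw [add_lie, lie_add, lie_add, h1, key x b]
    abel
end

section
/- Let G = {(s,x) : s ∈ ℝ, s ≠ 0, x ∈ ℝ} with the product (s,x)(t,y) = (st, x + sy), and consider the subgroups G₁ = {(g, 0) : g ≠ 0} and G₂ = {(s, s−1) : s ≠ 0}. Then G₁ ∩ G₂ = {(1,0)}, the product set G₁G₂ equals {(t,x) ∈ G : t ≠ x}, and its complement {(t,t) : t ≠ 0} is a Lebesgue-null subset of ℝ². -/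
lemma diag_null : MeasureTheory.volume {p : ℝ × ℝ | p.2 = p.1} = 0 := by
  have h : {p : ℝ × ℝ | p.2 = p.1} =
      (LinearMap.ker ((LinearMap.snd ℝ ℝ ℝ) - (LinearMap.fst ℝ ℝ ℝ)) : Submodule ℝ (ℝ × ℝ)) := by
    ext p
    simp [sub_eq_zero]
  rw [h]
  apply MeasureTheory.Measure.addHaar_submodule
  intro htop
  have : ((1, 0) : ℝ × ℝ) ∈ LinearMap.ker ((LinearMap.snd ℝ ℝ ℝ) - (LinearMap.fst ℝ ℝ ℝ)) := by
    rw [htop]; trivial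
  simp [LinearMap.mem_ker, sub_eq_zero] at this

/-- In `G = (ℝ \ {0}) × ℝ` with product `(s,x)(t,y) = (st, x + sy)`, the subgroups
`G₁ = {(g,0)}` and `G₂ = {(s, s−1)}` satisfy `G₁ ∩ G₂ = {(1,0)}`, the product set
`G₁G₂` equals `{(t,x) : t ≠ 0, x ≠ t}`, and its complement `{(t,t) : t ≠ 0}` in `G`
is Lebesgue-null in `ℝ²`. -/
theorem real_ax_b_matched_pair
    (mul : ℝ × ℝ → ℝ × ℝ → ℝ × ℝ)
    (hmul : ∀ s x t y : ℝ, mul (s, x) (t, y) = (s * t, x + s * y))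
    (G G1 G2 : Set (ℝ × ℝ))
    (hG : G = {p | p.1 ≠ 0})
    (hG1 : G1 = {p | p.1 ≠ 0 ∧ p.2 = 0})
    (hG2 : G2 = {p | p.1 ≠ 0 ∧ p.2 = p.1 - 1}) :
    G1 ∩ G2 = {(1, 0)} ∧
    Set.image2 mul G1 G2 = {p | p.1 ≠ 0 ∧ p.2 ≠ p.1} ∧
    G \ Set.image2 mul G1 G2 = {p | p.1 ≠ 0 ∧ p.2 = p.1} ∧
    MeasureTheory.volume {p : ℝ × ℝ | p.1 ≠ 0 ∧ p.2 = p.1} = 0 := by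
  subst hG hG1 hG2
  have himg : Set.image2 mul {p : ℝ × ℝ | p.1 ≠ 0 ∧ p.2 = 0}
      {p : ℝ × ℝ | p.1 ≠ 0 ∧ p.2 = p.1 - 1} = {p : ℝ × ℝ | p.1 ≠ 0 ∧ p.2 ≠ p.1} := by
    ext ⟨t, x⟩
    constructor
    · rintro ⟨⟨g, y⟩, ⟨hg, hy⟩, ⟨s, z⟩, ⟨hs, hz⟩, heq⟩
      simp only at hy hz
      subst hy hz
      rw [hmul] at heq
      obtain ⟨h1, h2⟩ := Prod.mk.injEq .. ▸ heq
      simp only [Prod.mk.injEq] at heq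
      constructor
      · rw [← heq.1]; exact mul_ne_zero hg hs
      · rw [← heq.1, ← heq.2]
        intro h
        have : g = 0 := by ring_nf at h ⊢; linarith
        exact hg this
    · rintro ⟨ht, hx⟩
      refine ⟨(t - x, 0), ⟨sub_ne_zero.mpr (Ne.symm hx), rfl⟩,
        (t / (t - x), t / (t - x) - 1), ⟨?_, rfl⟩, ?_⟩
      · exact div_ne_zero ht (sub_ne_zero.mpr (Ne.symm hx))
      · rw [hmul]
        have h0 : t - x ≠ 0 := sub_ne_zero.mpr (Ne.symm hx)
        have : (t - x) * (t / (t - x)) = t := by field_simp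
        simp only [Prod.mk.injEq]
        constructor
        · exact this
        · rw [mul_sub, this, mul_one]; ring
  refine ⟨?_, himg, ?_, ?_⟩
  · ext ⟨a, b⟩
    simp only [Set.mem_inter_iff, Set.mem_setOf_eq, Set.mem_singleton_iff, Prod.mk.injEq]
    constructor
    · rintro ⟨⟨ha, hb⟩, _, hb'⟩
      subst hb
      constructor
      · linarith [hb'.symm]
      · rfl
    · rintro ⟨rfl, rfl⟩
      norm_num
  · rw [himg]
    ext ⟨t, x⟩
    simp only [Set.mem_diff, Set.mem_setOf_eq, not_and, not_not]
    constructor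
    · rintro ⟨ht, h⟩; exact ⟨ht, h ht⟩
    · rintro ⟨ht, hx⟩; exact ⟨ht, fun _ => hx⟩
  · exact MeasureTheory.measure_mono_null (fun p hp => hp.2) diag_null
end

section
/- Let G = (ℂ \ {0}) × ℂ with the product (t,s)(t',s') = (tt', s + ts'), and define i(g) = (g, 0) and j(s) = (s, s−1) for g, s ∈ ℂ \ {0}. Let g, s ∈ ℂ \ {0} satisfy g(s−1) + 1 ≠ 0, and set α = g(s−1) + 1 and β = sg/(g(s−1)+1). Then α ≠ 0, β ≠ 0, and j(α)·i(β) = i(g)·j(s) in G. -/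
/-- In `G = (ℂ \ {0}) × ℂ` with product `(t,s)(t',s') = (tt', s + ts')`, with
`i(g) = (g,0)` and `j(s) = (s, s−1)`: if `g(s−1) + 1 ≠ 0` then
`α = g(s−1)+1` and `β = sg/(g(s−1)+1)` are nonzero and satisfy
`j(α)·i(β) = i(g)·j(s)`. -/
theorem complex_matched_pair_factorization
    (mul : ℂ × ℂ → ℂ × ℂ → ℂ × ℂ)
    (hmul : ∀ t s t' s' : ℂ, mul (t, s) (t', s') = (t * t', s + t * s'))
    (i j : ℂ → ℂ × ℂ)
    (hi : ∀ g : ℂ, i g = (g, 0)) (hj : ∀ s : ℂ, j s = (s, s - 1))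
    (g s : ℂ) (hg : g ≠ 0) (hs : s ≠ 0) (h : g * (s - 1) + 1 ≠ 0)
    (α β : ℂ) (hα : α = g * (s - 1) + 1) (hβ : β = s * g / (g * (s - 1) + 1)) :
    α ≠ 0 ∧ β ≠ 0 ∧ mul (j α) (i β) = mul (i g) (j s) := by
  subst hα hβ
  refine ⟨h, div_ne_zero (mul_ne_zero hs hg) h, ?_⟩
  simp only [hi, hj, hmul, Prod.mk.injEq]
  constructor
  · rw [mul_div_cancel₀ _ h, mul_comm]
  · ring
end

section
/- Let G = {(s,x) : s ∈ ℝ, s > 0, x ∈ ℝ} with the product (s,x)(t,y) = (st, x + sy) (the connected component of the identity of the affine group of the real line), and consider the subgroups G₁ = {(g,0) : g > 0} and G₂ = {(s, s−1) : s > 0}. Then the product set G₁G₂ equals {(t,x) : t > 0, x < t}; in particular G₁G₂ is not dense in G. -/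
/-!
Since `(g, 0)(s, s - 1) = (gs, gs - g)`, an element `(t, x)` of `G₁G₂` satisfies `x = t - g < t`;
conversely `g = t - x` and `s = t / g` factor any `(t, x)` with `x < t`. The product set thus lies
in the closed half-plane `x ≤ t`, which misses the point `(1, 2)` of `G`.
-/

open Set

lemma mem_image2_affine_iff (mul : ℝ × ℝ → ℝ × ℝ → ℝ × ℝ)
    (hmul : ∀ s x t y : ℝ, mul (s, x) (t, y) = (s * t, x + s * y)) (t x : ℝ) :
    (t, x) ∈ image2 mul {p | 0 < p.1 ∧ p.2 = 0} {p | 0 < p.1 ∧ p.2 = p.1 - 1} ↔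
      0 < t ∧ x < t := by
  constructor
  · rintro ⟨⟨g, _⟩, ⟨hg, rfl⟩, ⟨s, y⟩, ⟨hs, hy : y = s - 1⟩, hprod⟩
    simp only [hmul, hy, Prod.mk.injEq] at hprod
    obtain ⟨rfl, rfl⟩ := hprod
    constructor <;> nlinarith [mul_pos hg hs]
  · rintro ⟨ht, hx⟩
    have hg : 0 < t - x := sub_pos.mpr hx
    refine ⟨(t - x, 0), ⟨hg, rfl⟩, (t / (t - x), t / (t - x) - 1), ⟨div_pos ht hg, rfl⟩, ?_⟩
    rw [hmul, Prod.mk.injEq]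
    constructor
    · field_simp
    · field_simp
      ring

lemma closure_setOf_lt_subset :
    closure {p : ℝ × ℝ | 0 < p.1 ∧ p.2 < p.1} ⊆ {p | p.2 ≤ p.1} :=
  closure_minimal (fun _ hp => hp.2.le) (isClosed_le continuous_snd continuous_fst)

/-- In the connected affine group of the real line, realized as
`G = ℝ_{>0} × ℝ` with product `(s,x)(t,y) = (st, x + sy)`, the product of the
subgroups `G₁ = {(g,0) : g > 0}` and `G₂ = {(s, s−1) : s > 0}` equals
`{(t,x) : t > 0, x < t}`; in particular `G₁G₂` is not dense in `G`. -/
theorem affine_group_product_not_dense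
    (mul : ℝ × ℝ → ℝ × ℝ → ℝ × ℝ)
    (hmul : ∀ s x t y : ℝ, mul (s, x) (t, y) = (s * t, x + s * y))
    (G1 G2 : Set (ℝ × ℝ))
    (hG1 : G1 = {p | 0 < p.1 ∧ p.2 = 0})
    (hG2 : G2 = {p | 0 < p.1 ∧ p.2 = p.1 - 1}) :
    Set.image2 mul G1 G2 = {p | 0 < p.1 ∧ p.2 < p.1} ∧
    ¬ ({p : ℝ × ℝ | 0 < p.1} ⊆ closure (Set.image2 mul G1 G2)) := by
  have himage : image2 mul G1 G2 = {p | 0 < p.1 ∧ p.2 < p.1} := by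
    ext ⟨t, x⟩
    rw [hG1, hG2, mem_image2_affine_iff mul hmul]
    rfl
  refine ⟨himage, fun hdense => ?_⟩
  have hmem : ((1 : ℝ), (2 : ℝ)) ∈ closure (image2 mul G1 G2) := hdense (by norm_num)
  rw [himage] at hmem
  have : (2 : ℝ) ≤ 1 := closure_setOf_lt_subset hmem
  norm_num at this
end

section
/- Let H = ℂ × ℂ with the product (t,s)(t',s') = (t + t', s + e^t s'), and consider the subgroups G₁ = {(g, 0) : g ∈ ℂ} and G₂ = {(s, e^s − 1) : s ∈ ℂ}. Then G₁ ∩ G₂ = {(2πin, 0) : n ∈ ℤ}, and this set equals the center Z(H) of H. -/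
/-!
An element `(a, b)` commutes with `(t, s)` exactly when `(eᵃ - 1) s = (eᵗ - 1) b`. Letting `s`
vary forces `eᵃ = 1`, and taking `t = 1` (where `eᵗ ≠ 1`) forces `b = 0`; so the center is
`{(a, 0) : eᵃ = 1}`. The same set is `G₁ ∩ G₂`, since `(s, eˢ - 1)` lies on the axis `ℂ × {0}`
precisely when `eˢ = 1`. Finally `eᵃ = 1` means `a ∈ 2πiℤ`.
-/

open Complex
open scoped Real

lemma exp_eq_one_iff_exists_two_pi_I_mul {x : ℂ} :
    exp x = 1 ↔ ∃ n : ℤ, x = 2 * π * I * n :=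
  exp_eq_one_iff.trans <| exists_congr fun _ => by rw [mul_comm]

lemma setOf_two_pi_I_int_mul_eq :
    {q : ℂ × ℂ | ∃ n : ℤ, q = (2 * π * I * n, 0)} = {q | exp q.1 = 1 ∧ q.2 = 0} := by
  ext ⟨a, b⟩
  simp only [Set.mem_ofPred_eq, Prod.mk.injEq, exists_and_right,
    exp_eq_one_iff_exists_two_pi_I_mul]

lemma exp_one_ne_one : exp 1 ≠ 1 := by
  rw [← ofReal_one, ← ofReal_exp, Ne, ofReal_inj, Real.exp_eq_one_iff]
  exact one_ne_zero

lemma axis_inter_graph_exp_sub_one :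
    {q : ℂ × ℂ | ∃ g : ℂ, q = (g, 0)} ∩ {q | ∃ s : ℂ, q = (s, exp s - 1)} =
      {q | exp q.1 = 1 ∧ q.2 = 0} := by
  ext ⟨a, b⟩
  simp only [Set.mem_inter_iff, Set.mem_ofPred_eq, Prod.mk.injEq, exists_eq_left']
  constructor
  · rintro ⟨hb, hab⟩
    exact ⟨by linear_combination hb - hab, hb⟩
  · rintro ⟨ha, hb⟩
    exact ⟨hb, by rw [hb, ha, sub_self]⟩

section AffineProduct

variable {mul : ℂ × ℂ → ℂ × ℂ → ℂ × ℂ}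

lemma commute_iff_of_mul_eq
    (hmul : ∀ t s t' s' : ℂ, mul (t, s) (t', s') = (t + t', s + exp t * s')) (a b t s : ℂ) :
    mul (a, b) (t, s) = mul (t, s) (a, b) ↔ (exp a - 1) * s = (exp t - 1) * b := by
  rw [hmul, hmul, Prod.mk.injEq, add_comm a t]
  constructor
  · rintro ⟨-, h⟩
    linear_combination h
  · intro h
    exact ⟨rfl, by linear_combination h⟩

lemma forall_exp_sub_one_mul_eq_iff {a b : ℂ} :
    (∀ t s : ℂ, (exp a - 1) * s = (exp t - 1) * b) ↔ exp a = 1 ∧ b = 0 := by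
  constructor
  · intro h
    have ha : exp a = 1 := by simpa [sub_eq_zero] using h 0 1
    have hb : (exp 1 - 1) * b = 0 := by simpa [ha] using (h 1 0).symm
    exact ⟨ha, (mul_eq_zero.mp hb).resolve_left (sub_ne_zero.mpr exp_one_ne_one)⟩
  · rintro ⟨ha, hb⟩ t s
    simp [ha, hb]

lemma center_eq_of_mul_eq
    (hmul : ∀ t s t' s' : ℂ, mul (t, s) (t', s') = (t + t', s + exp t * s')) :
    {z | ∀ q, mul z q = mul q z} = {q : ℂ × ℂ | exp q.1 = 1 ∧ q.2 = 0} := by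
  ext ⟨a, b⟩
  simp only [Set.mem_ofPred_eq, Prod.forall, commute_iff_of_mul_eq hmul]
  exact forall_exp_sub_one_mul_eq_iff

end AffineProduct

/-- In `H = ℂ × ℂ` with product `(t,s)(t',s') = (t+t', s + eᵗs')`, the subgroups
`G₁ = {(g,0)}` and `G₂ = {(s, eˢ − 1)}` intersect exactly in
`{(2πin, 0) : n ∈ ℤ}`, which is also the center of `H`. -/
theorem simply_connected_cover_intersection_is_center
    (mul : ℂ × ℂ → ℂ × ℂ → ℂ × ℂ)
    (hmul : ∀ t s t' s' : ℂ, mul (t, s) (t', s') = (t + t', s + Complex.exp t * s'))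
    (G1 G2 C : Set (ℂ × ℂ))
    (hG1 : G1 = {q | ∃ g : ℂ, q = (g, 0)})
    (hG2 : G2 = {q | ∃ s : ℂ, q = (s, Complex.exp s - 1)})
    (hC : C = {q | ∃ n : ℤ, q = (2 * (Real.pi : ℂ) * Complex.I * (n : ℂ), 0)}) :
    G1 ∩ G2 = C ∧ {z | ∀ q, mul z q = mul q z} = C := by
  subst hG1 hG2 hC
  rw [setOf_two_pi_I_int_mul_eq]
  exact ⟨axis_inter_graph_exp_sub_one, center_eq_of_mul_eq hmul⟩
end

section
/- Let α ∈ ℂ \ {0} and let H = ℂ × ℂ × ℂ with the product (t,u,v)(t',u',v') = (t + t', u + e^t u', v + e^{αt} v'). Then the center of H equals {(2πik, 0, 0) : k ∈ ℤ and αk ∈ ℤ}. In particular, if α is not a rational number then the center of H is trivial. -/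
/-- In `H = ℂ³` with product `(t,u,v)(t',u',v') = (t+t', u + eᵗu', v + e^{αt}v')`
(`α ≠ 0`), the center equals `{(2πik, 0, 0) : k ∈ ℤ, αk ∈ ℤ}`; in particular if
`α` is not rational then the center is trivial. -/
theorem three_dim_cover_center
    (α : ℂ) (hα : α ≠ 0)
    (mul : ℂ × ℂ × ℂ → ℂ × ℂ × ℂ → ℂ × ℂ × ℂ)
    (hmul : ∀ t u v t' u' v' : ℂ, mul (t, u, v) (t', u', v') =
      (t + t', u + Complex.exp t * u', v + Complex.exp (α * t) * v')) :
    {z : ℂ × ℂ × ℂ | ∀ q, mul z q = mul q z} =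
      {q | ∃ k : ℤ, (∃ m : ℤ, α * (k : ℂ) = (m : ℂ)) ∧
        q = (2 * (Real.pi : ℂ) * Complex.I * (k : ℂ), 0, 0)} ∧
    ((∀ r : ℚ, α ≠ (r : ℂ)) →
      {z : ℂ × ℂ × ℂ | ∀ q, mul z q = mul q z} = {(0, 0, 0)}) := by
  have h2pi : (2 : ℂ) * Real.pi * Complex.I ≠ 0 := by
    simp [Real.pi_ne_zero, Complex.I_ne_zero]
  have hexp2 : Complex.exp ((Real.log 2 : ℝ) : ℂ) = 2 := by
    rw [← Complex.ofReal_exp, Real.exp_log (by norm_num)]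
    norm_num
  have key : {z : ℂ × ℂ × ℂ | ∀ q, mul z q = mul q z} =
      {q | ∃ k : ℤ, (∃ m : ℤ, α * (k : ℂ) = (m : ℂ)) ∧
        q = (2 * (Real.pi : ℂ) * Complex.I * (k : ℂ), 0, 0)} := by
    ext ⟨t, u, v⟩
    simp only [Set.mem_setOf_eq]
    constructor
    · intro h
      have h1 := h (0, 1, 0)
      have h2 := h (0, 0, 1)
      have h3 := h (((Real.log 2 : ℝ) : ℂ), 0, 0)
      have h4 := h (((Real.log 2 : ℝ) : ℂ) / α, 0, 0)
      rw [hmul, hmul] at h1 h2 h3 h4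
      have het : Complex.exp t = 1 := by
        have e1 := congrArg (fun p => p.2.1) h1
        simp only [Complex.exp_zero, mul_one, one_mul] at e1
        linear_combination e1
      have heat : Complex.exp (α * t) = 1 := by
        have e2 := congrArg (fun p => p.2.2) h2
        simp only [mul_zero, Complex.exp_zero, mul_one, one_mul] at e2
        linear_combination e2
      have hu : u = 0 := by
        have e3 := congrArg (fun p => p.2.1) h3
        simp only [mul_zero, add_zero, zero_add, hexp2] at e3
        linear_combination -e3
      have hv : v = 0 := by
        have e4 := congrArg (fun p => p.2.2) h4
        have : Complex.exp (α * (((Real.log 2 : ℝ) : ℂ) / α)) = 2 := by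
          rw [mul_div_cancel₀ _ hα, hexp2]
        simp only [mul_zero, add_zero, zero_add, this] at e4
        linear_combination -e4
      rw [Complex.exp_eq_one_iff] at het heat
      obtain ⟨k, hk⟩ := het
      obtain ⟨m, hm⟩ := heat
      refine ⟨k, ⟨m, ?_⟩, ?_⟩
      · have h5 : (α * (k : ℂ)) * (2 * Real.pi * Complex.I)
            = (m : ℂ) * (2 * Real.pi * Complex.I) := by
          linear_combination hm - α * hk
        exact mul_right_cancel₀ h2pi h5
      · refine Prod.ext ?_ (Prod.ext hu hv)
        simp only
        rw [hk]; ring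
    · rintro ⟨k, ⟨m, hm⟩, heq⟩
      rw [Prod.mk.injEq, Prod.mk.injEq] at heq
      obtain ⟨rfl, rfl, rfl⟩ := heq
      intro ⟨t', u', v'⟩
      rw [hmul, hmul]
      have e1 : Complex.exp (2 * (Real.pi : ℂ) * Complex.I * (k : ℂ)) = 1 := by
        rw [Complex.exp_eq_one_iff]
        exact ⟨k, by ring⟩
      have e2 : Complex.exp (α * (2 * (Real.pi : ℂ) * Complex.I * (k : ℂ))) = 1 := by
        rw [Complex.exp_eq_one_iff]
        exact ⟨m, by linear_combination (2 * (Real.pi : ℂ) * Complex.I) * hm⟩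
      rw [e1, e2]
      refine Prod.ext (by ring) (Prod.ext (by ring) (by ring))
  refine ⟨key, fun hirr => ?_⟩
  rw [key]
  ext ⟨t, u, v⟩
  simp only [Set.mem_setOf_eq, Set.mem_singleton_iff]
  constructor
  · rintro ⟨k, ⟨m, hm⟩, heq⟩
    rw [Prod.mk.injEq, Prod.mk.injEq] at heq
    obtain ⟨rfl, rfl, rfl⟩ := heq
    have hk0 : k = 0 := by
      by_contra hk
      apply hirr ((m : ℚ) / (k : ℚ))
      have : ((k : ℤ) : ℂ) ≠ 0 := Int.cast_ne_zero.mpr hk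
      push_cast
      rw [eq_div_iff this]
      linear_combination hm
    subst hk0
    simp
  · rintro h
    refine ⟨0, ⟨0, by simp⟩, ?_⟩
    simp [Prod.ext_iff] at h ⊢
    exact ⟨h.1, h.2.1, h.2.2⟩
end

section
/- Let m, n, N be integers and let G = (ℂ \ {0}) × ℂ × ℂ with the product (a,u,v)(a',u',v') = (aa', u + a^{nN} u', v + a^{mN} v'). Then K₁ = {(a,u,0) : a ∈ ℂ\{0}, u ∈ ℂ} and K₂ = {(b, 0, b^{mN} − 1) : b ∈ ℂ\{0}} are subgroups of G, and K₁ ∩ K₂ = {(b, 0, 0) : b ∈ ℂ\{0}, b^{mN} = 1}. In particular, if mN ∉ {1, −1} then K₁ ∩ K₂ ≠ {(1,0,0)}. -/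
/-!
Write `k = mN`. Both sets are closed under the product and under the inverse
`(a, u, v)⁻¹ = (a⁻¹, -a⁻ⁿᴺ u, -a⁻ᵏ v)`. The third coordinate of `(b, 0, b^k - 1)` vanishes exactly
when `b^k = 1`, which gives the intersection. When `k ∉ {1, -1}` there is a `b ≠ 1` with `b^k = 1`
(a primitive `|k|`-th root of unity, or any `b ≠ 0, 1` if `k = 0`), and then `(b, 0, 0)` is a
nontrivial element of `K₁ ∩ K₂`.
-/

def IsSubgroupFor {α : Type*} (mul : α → α → α) (e : α) (S : Set α) : Prop :=
  e ∈ S ∧ (∀ q ∈ S, ∀ r ∈ S, mul q r ∈ S) ∧ ∀ q ∈ S, ∃ r ∈ S, mul q r = e ∧ mul r q = e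

section TwistedProduct

variable {K : Type*} [Field K] (l k : ℤ)

def twistedMul (p q : K × K × K) : K × K × K :=
  (p.1 * q.1, p.2.1 + p.1 ^ l * q.2.1, p.2.2 + p.1 ^ k * q.2.2)

def twistedInv (p : K × K × K) : K × K × K :=
  (p.1⁻¹, -p.1⁻¹ ^ l * p.2.1, -p.1⁻¹ ^ k * p.2.2)

variable {l k}

lemma twistedMul_twistedInv {p : K × K × K} (hp : p.1 ≠ 0) :
    twistedMul l k p (twistedInv l k p) = (1, 0, 0) := by
  obtain ⟨a, u, v⟩ := p
  simp [twistedMul, twistedInv, mul_inv_cancel₀ hp, ← mul_assoc,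
    mul_inv_cancel₀ (zpow_ne_zero l hp), mul_inv_cancel₀ (zpow_ne_zero k hp)]

lemma twistedInv_twistedMul {p : K × K × K} (hp : p.1 ≠ 0) :
    twistedMul l k (twistedInv l k p) p = (1, 0, 0) := by
  obtain ⟨a, u, v⟩ := p
  simp [twistedMul, twistedInv, inv_mul_cancel₀ hp]

lemma isSubgroupFor_setOf_snd_snd_eq_zero :
    IsSubgroupFor (twistedMul l k) (1, 0, 0) {q : K × K × K | q.1 ≠ 0 ∧ q.2.2 = 0} := by
  refine ⟨⟨one_ne_zero, rfl⟩, ?_, ?_⟩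
  · rintro q ⟨hq, hq'⟩ r ⟨hr, hr'⟩
    exact ⟨mul_ne_zero hq hr, by simp [twistedMul, hq', hr']⟩
  · rintro q ⟨hq, hq'⟩
    exact ⟨twistedInv l k q, ⟨inv_ne_zero hq, by simp [twistedInv, hq']⟩,
      twistedMul_twistedInv hq, twistedInv_twistedMul hq⟩

lemma twistedMul_mk_zero_zpow_sub_one (a b : K) :
    twistedMul l k (a, 0, a ^ k - 1) (b, 0, b ^ k - 1) = (a * b, 0, (a * b) ^ k - 1) := by
  simp only [twistedMul, mul_zpow]
  ring_nf

lemma isSubgroupFor_setOf_eq_mk_zero_zpow_sub_one :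
    IsSubgroupFor (twistedMul l k) (1, 0, 0)
      {q : K × K × K | ∃ b : K, b ≠ 0 ∧ q = (b, 0, b ^ k - 1)} := by
  refine ⟨⟨1, one_ne_zero, by simp⟩, ?_, ?_⟩
  · rintro q ⟨a, ha, rfl⟩ r ⟨b, hb, rfl⟩
    exact ⟨a * b, mul_ne_zero ha hb, twistedMul_mk_zero_zpow_sub_one a b⟩
  · rintro q ⟨b, hb, rfl⟩
    refine ⟨twistedInv l k (b, 0, b ^ k - 1), ⟨b⁻¹, inv_ne_zero hb, ?_⟩,
      twistedMul_twistedInv hb, twistedInv_twistedMul hb⟩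
    have hinv : b⁻¹ ^ k * b ^ k = 1 := by rw [← mul_zpow, inv_mul_cancel₀ hb, one_zpow]
    simp only [twistedInv, mul_zero, Prod.mk.injEq, true_and]
    linear_combination -hinv

lemma setOf_snd_snd_eq_zero_inter_setOf_eq_mk_zero_zpow_sub_one :
    {q : K × K × K | q.1 ≠ 0 ∧ q.2.2 = 0} ∩ {q | ∃ b : K, b ≠ 0 ∧ q = (b, 0, b ^ k - 1)} =
      {q | ∃ b : K, b ≠ 0 ∧ b ^ k = 1 ∧ q = (b, 0, 0)} := by
  ext q
  constructor
  · rintro ⟨⟨-, hq⟩, b, hb, rfl⟩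
    have hbk : b ^ k = 1 := sub_eq_zero.mp hq
    exact ⟨b, hb, hbk, by simp [hbk]⟩
  · rintro ⟨b, hb, hbk, rfl⟩
    exact ⟨⟨hb, rfl⟩, b, hb, by simp [hbk]⟩

end TwistedProduct

lemma Complex.exists_ne_one_zpow_eq_one {k : ℤ} (h1 : k ≠ 1) (h2 : k ≠ -1) :
    ∃ b : ℂ, b ≠ 0 ∧ b ≠ 1 ∧ b ^ k = 1 := by
  rcases eq_or_ne k 0 with rfl | hk
  · exact ⟨2, two_ne_zero, by norm_num, zpow_zero 2⟩
  obtain ⟨b, hb⟩ : ∃ b : ℂ, IsPrimitiveRoot b k.natAbs :=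
    ⟨_, Complex.isPrimitiveRoot_exp _ (Int.natAbs_ne_zero.mpr hk)⟩
  exact ⟨b, hb.ne_zero (Int.natAbs_ne_zero.mpr hk), hb.ne_one (by omega),
    hb.zpow_eq_one_iff_dvd k |>.mpr (Int.natAbs_dvd.mpr dvd_rfl)⟩

/-- In `G = (ℂ \ {0}) × ℂ × ℂ` with product
`(a,u,v)(a',u',v') = (aa', u + a^{nN}u', v + a^{mN}v')`, the sets
`K₁ = {(a,u,0) : a ≠ 0}` and `K₂ = {(b, 0, b^{mN} − 1) : b ≠ 0}` are subgroups,
`K₁ ∩ K₂ = {(b,0,0) : b^{mN} = 1}`, and if `mN ∉ {1, −1}` then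
`K₁ ∩ K₂ ≠ {(1,0,0)}`. -/
theorem quotient_group_subgroups_intersection
    (m n N : ℤ)
    (mul : ℂ × ℂ × ℂ → ℂ × ℂ × ℂ → ℂ × ℂ × ℂ)
    (hmul : ∀ a u v a' u' v' : ℂ, mul (a, u, v) (a', u', v') =
      (a * a', u + a ^ (n * N) * u', v + a ^ (m * N) * v'))
    (K1 K2 : Set (ℂ × ℂ × ℂ))
    (hK1 : K1 = {q | q.1 ≠ 0 ∧ q.2.2 = 0})
    (hK2 : K2 = {q | ∃ b : ℂ, b ≠ 0 ∧ q = (b, 0, b ^ (m * N) - 1)}) :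
    ((1, 0, 0) ∈ K1 ∧ (∀ q ∈ K1, ∀ r ∈ K1, mul q r ∈ K1) ∧
      (∀ q ∈ K1, ∃ r ∈ K1, mul q r = (1, 0, 0) ∧ mul r q = (1, 0, 0))) ∧
    ((1, 0, 0) ∈ K2 ∧ (∀ q ∈ K2, ∀ r ∈ K2, mul q r ∈ K2) ∧
      (∀ q ∈ K2, ∃ r ∈ K2, mul q r = (1, 0, 0) ∧ mul r q = (1, 0, 0))) ∧
    K1 ∩ K2 = {q | ∃ b : ℂ, b ≠ 0 ∧ b ^ (m * N) = 1 ∧ q = (b, 0, 0)} ∧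
    (m * N ≠ 1 → m * N ≠ -1 → K1 ∩ K2 ≠ {((1 : ℂ), (0 : ℂ), (0 : ℂ))}) := by
  have hmul' : mul = twistedMul (n * N) (m * N) := by
    funext ⟨a, u, v⟩ ⟨a', u', v'⟩
    exact hmul a u v a' u' v'
  subst hmul' hK1 hK2
  have hinter := setOf_snd_snd_eq_zero_inter_setOf_eq_mk_zero_zpow_sub_one (K := ℂ) (k := m * N)
  refine ⟨isSubgroupFor_setOf_snd_snd_eq_zero, isSubgroupFor_setOf_eq_mk_zero_zpow_sub_one,
    hinter, fun h1 h2 htrivial => ?_⟩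
  obtain ⟨b, hb0, hb1, hbk⟩ := Complex.exists_ne_one_zpow_eq_one h1 h2
  have hmem : ((b, 0, 0) : ℂ × ℂ × ℂ) ∈ ({(1, 0, 0)} : Set (ℂ × ℂ × ℂ)) :=
    htrivial ▸ hinter ▸ ⟨b, hb0, hbk, rfl⟩
  exact hb1 (Prod.ext_iff.mp hmem).1
end

section
/- Let n be a nonzero integer and let G = (ℂ \ {0}) × ℂ × ℂ with the product (a,u,v)(a',u',v') = (aa', u + aⁿ u', v + a v'). Define i(a,u) = (a, u, 0) for a ∈ ℂ\{0}, u ∈ ℂ, and j(v) = (v, 0, v−1) for v ∈ ℂ\{0}. Let a, v ∈ ℂ \ {0} and u ∈ ℂ with a(v−1) + 1 ≠ 0, and set α = a(v−1) + 1, β₁ = va/(a(v−1)+1), β₂ = u/(a(v−1)+1)ⁿ. Then α ≠ 0, β₁ ≠ 0, and j(α) · i(β₁, β₂) = i(a,u) · j(v) in G. -/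
theorem three_dim_matched_pair_factorization_general
    (n : ℤ)
    (mul : ℂ × ℂ × ℂ → ℂ × ℂ × ℂ → ℂ × ℂ × ℂ)
    (hmul : ∀ a u v a' u' v' : ℂ, mul (a, u, v) (a', u', v') =
      (a * a', u + a ^ n * u', v + a * v'))
    (i : ℂ × ℂ → ℂ × ℂ × ℂ) (j : ℂ → ℂ × ℂ × ℂ)
    (hi : ∀ a u : ℂ, i (a, u) = (a, u, 0))
    (hj : ∀ v : ℂ, j v = (v, 0, v - 1))
    (a v : ℂ) (u : ℂ) (ha : a ≠ 0) (hv : v ≠ 0) (h : a * (v - 1) + 1 ≠ 0)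
    (α β₁ β₂ : ℂ)
    (hα : α = a * (v - 1) + 1)
    (hβ₁ : β₁ = v * a / (a * (v - 1) + 1))
    (hβ₂ : β₂ = u / (a * (v - 1) + 1) ^ n) :
    α ≠ 0 ∧ β₁ ≠ 0 ∧ mul (j α) (i (β₁, β₂)) = mul (i (a, u)) (j v) := by
  subst hα hβ₁ hβ₂
  refine ⟨h, div_ne_zero (mul_ne_zero hv ha) h, ?_⟩
  rw [hj, hi, hi, hj, hmul, hmul, Prod.mk.injEq, Prod.mk.injEq]
  refine ⟨?_, ?_, by ring⟩
  · rw [mul_div_cancel₀ _ h, mul_comm]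
  · rw [mul_div_cancel₀ _ (zpow_ne_zero n h)]
    ring

/-- In `G = (ℂ \ {0}) × ℂ × ℂ` with product
`(a,u,v)(a',u',v') = (aa', u + aⁿu', v + av')` (`n ≠ 0` an integer), with
`i(a,u) = (a,u,0)` and `j(v) = (v,0,v−1)`: if `a(v−1) + 1 ≠ 0` then
`α = a(v−1)+1 ≠ 0`, `β₁ = va/(a(v−1)+1) ≠ 0`, and with `β₂ = u/(a(v−1)+1)ⁿ` one
has `j(α)·i(β₁,β₂) = i(a,u)·j(v)`. -/
theorem three_dim_matched_pair_factorization
    (n : ℤ) (hn : n ≠ 0)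
    (mul : ℂ × ℂ × ℂ → ℂ × ℂ × ℂ → ℂ × ℂ × ℂ)
    (hmul : ∀ a u v a' u' v' : ℂ, mul (a, u, v) (a', u', v') =
      (a * a', u + a ^ n * u', v + a * v'))
    (i : ℂ × ℂ → ℂ × ℂ × ℂ) (j : ℂ → ℂ × ℂ × ℂ)
    (hi : ∀ a u : ℂ, i (a, u) = (a, u, 0))
    (hj : ∀ v : ℂ, j v = (v, 0, v - 1))
    (a v : ℂ) (u : ℂ) (ha : a ≠ 0) (hv : v ≠ 0) (h : a * (v - 1) + 1 ≠ 0)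
    (α β₁ β₂ : ℂ)
    (hα : α = a * (v - 1) + 1)
    (hβ₁ : β₁ = v * a / (a * (v - 1) + 1))
    (hβ₂ : β₂ = u / (a * (v - 1) + 1) ^ n) :
    α ≠ 0 ∧ β₁ ≠ 0 ∧ mul (j α) (i (β₁, β₂)) = mul (i (a, u)) (j v) :=
  three_dim_matched_pair_factorization_general n mul hmul i j hi hj a v u ha hv h α β₁ β₂ hα hβ₁ hβ₂
end
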